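/- For every system S of N-cones and every primitive sublattice L ⊆ N there exists a quotient quasifan of S by L in N/L itself: a quasifan Σ in N₁ := N/L such that the projection P₁ : N → N₁ defines a map of systems of cones from S to Σ, and every map of systems of cones F : (N,S) → (N',Σ') into a quasifan Σ' with F(L) = 0 factors as F = F₁ ∘ P₁ for a unique map of quasifans F₁ : (N₁,Σ) → (N',Σ'). -/

import Mathlib

open Set

/-- The coercion of an integral vector in `ℤ^n` to a real vector in `ℝ^n`. -/
def toR {n : ℕ} (v : Fin n → ℤ) : Fin n → ℝ := fun i => (v i : ℝ)

/-- The scalar extension `F^ℝ : N^ℝ → N'^ℝ` of a `ℤ`-linear map `F : N → N'`,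
where `N = ℤ^n`, `N' = ℤ^m`. -/
noncomputable def extR {n m : ℕ} (F : (Fin n → ℤ) →ₗ[ℤ] (Fin m → ℤ)) :
    (Fin n → ℝ) →ₗ[ℝ] (Fin m → ℝ) :=
  (Matrix.of fun i j => ((F (Pi.single j 1)) i : ℝ)).mulVecLin

/-- A convex cone: a subset containing `0` that is closed under addition and
under multiplication by nonnegative scalars. -/
def IsCone {V : Type*} [AddCommGroup V] [Module ℝ V] (σ : Set V) : Prop :=
  0 ∈ σ ∧ (∀ x ∈ σ, ∀ y ∈ σ, x + y ∈ σ) ∧ ∀ c : ℝ, 0 ≤ c → ∀ x ∈ σ, c • x ∈ σ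

/-- The convex-cone hull of a set: the smallest convex cone containing it. -/
def coneHull {V : Type*} [AddCommGroup V] [Module ℝ V] (s : Set V) : Set V :=
  ⋂₀ {σ | IsCone σ ∧ s ⊆ σ}

/-- A rational polyhedral cone in `ℝ^n`: a convex cone generated by finitely
many vectors of the lattice `ℤ^n`. -/
def IsRatCone {n : ℕ} (σ : Set (Fin n → ℝ)) : Prop :=
  ∃ s : Finset (Fin n → ℤ), σ = coneHull (toR '' ↑s)

/-- A cone is strictly convex if it contains no nonzero linear subspace,
equivalently `σ ∩ (-σ) = {0}`. -/
def IsStrictlyConvexCone {V : Type*} [AddCommGroup V] [Module ℝ V] (σ : Set V) : Prop :=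
  ∀ x ∈ σ, -x ∈ σ → x = 0

/-- `τ` is a face of the convex cone `σ`: a subcone such that whenever
`x, y ∈ σ` and `x + y ∈ τ`, then `x, y ∈ τ`. -/
def IsFaceOf {V : Type*} [AddCommGroup V] [Module ℝ V] (τ σ : Set V) : Prop :=
  IsCone τ ∧ τ ⊆ σ ∧ ∀ x ∈ σ, ∀ y ∈ σ, x + y ∈ τ → x ∈ τ ∧ y ∈ τ

/-- A system of `N`-cones: a finite set of rational polyhedral cones in `ℝ^n`. -/
def IsConeSystem {n : ℕ} (S : Set (Set (Fin n → ℝ))) : Prop :=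
  S.Finite ∧ ∀ σ ∈ S, IsRatCone σ

/-- A quasifan: a finite set of rational polyhedral cones, closed under taking
faces, in which any two cones intersect in a common face. -/
def IsQuasifan {n : ℕ} (Δ : Set (Set (Fin n → ℝ))) : Prop :=
  IsConeSystem Δ ∧ (∀ σ ∈ Δ, ∀ τ, IsFaceOf τ σ → τ ∈ Δ) ∧
    ∀ σ ∈ Δ, ∀ σ' ∈ Δ, IsFaceOf (σ ∩ σ') σ

/-- A fan: a quasifan all of whose cones are strictly convex. -/
def IsFan {n : ℕ} (Δ : Set (Set (Fin n → ℝ))) : Prop :=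
  IsQuasifan Δ ∧ ∀ σ ∈ Δ, IsStrictlyConvexCone σ

/-- `F` defines a map of systems of cones (in particular of (quasi-)fans):
every cone of `S` is mapped by `F^ℝ` into some cone of `S'`. -/
def IsConeMap {n m : ℕ} (F : (Fin n → ℤ) →ₗ[ℤ] (Fin m → ℤ))
    (S : Set (Set (Fin n → ℝ))) (S' : Set (Set (Fin m → ℝ))) : Prop :=
  ∀ σ ∈ S, ∃ τ ∈ S', extR F '' σ ⊆ τ

/-- A sublattice `L ⊆ ℤ^n` is primitive if the quotient `ℤ^n/L` is
torsion-free. -/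
def IsPrimitive {n : ℕ} (L : Submodule ℤ (Fin n → ℤ)) : Prop :=
  ∀ (v : Fin n → ℤ) (k : ℤ), k ≠ 0 → k • v ∈ L → v ∈ L

/-- The set of maximal cones of a system of cones. -/
def maxCones {n : ℕ} (Δ : Set (Set (Fin n → ℝ))) : Set (Set (Fin n → ℝ)) :=
  {σ ∈ Δ | ∀ τ ∈ Δ, σ ⊆ τ → σ = τ}

/-- `ρ` is a ray (one-dimensional cone) of `Δ`. -/
def IsRay {n : ℕ} (Δ : Set (Set (Fin n → ℝ))) (ρ : Set (Fin n → ℝ)) : Prop :=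
  ρ ∈ Δ ∧ Module.finrank ℝ (Submodule.span ℝ ρ) = 1

/-- `Δt`, together with the surjection `P : ℤ^n → ℤ^m` onto the quotient of
`ℤ^n` by the primitive sublattice `L̂ = ker P ⊇ L`, is the quotient fan of the
system of cones `S` by `L`: the projection `P` defines a map of systems of
cones from `S` to the fan `Δt` and every map of systems of cones `F` from `S`
to a fan with `F(L) = 0` factors through `P` via a map of fans. -/
def IsQuotientFan {n m : ℕ} (S : Set (Set (Fin n → ℝ))) (L : Submodule ℤ (Fin n → ℤ))
    (P : (Fin n → ℤ) →ₗ[ℤ] (Fin m → ℤ)) (Δt : Set (Set (Fin m → ℝ))) : Prop :=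
  Function.Surjective P ∧ L ≤ LinearMap.ker P ∧ IsPrimitive (LinearMap.ker P) ∧
  IsFan Δt ∧ IsConeMap P S Δt ∧
  ∀ (k : ℕ) (F : (Fin n → ℤ) →ₗ[ℤ] (Fin k → ℤ)) (Δ' : Set (Set (Fin k → ℝ))),
    IsFan Δ' → IsConeMap F S Δ' → L ≤ LinearMap.ker F →
    ∃ Ft : (Fin m → ℤ) →ₗ[ℤ] (Fin k → ℤ), IsConeMap Ft Δt Δ' ∧ F = Ft.comp P


section Basics

variable {V : Type*} [AddCommGroup V] [Module ℝ V]

theorem isCone_coneHull (s : Set V) : IsCone (coneHull s) := by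
  constructor
  · exact fun σ hσ => hσ.1.1
  constructor
  · intro x hx y hy σ hσ
    exact hσ.1.2.1 x (hx σ hσ) y (hy σ hσ)
  · intro c hc x hx σ hσ
    exact hσ.1.2.2 c hc x (hx σ hσ)

theorem subset_coneHull (s : Set V) : s ⊆ coneHull s :=
  fun x hx σ hσ => hσ.2 hx

theorem coneHull_min {s σ : Set V} (hσ : IsCone σ) (hs : s ⊆ σ) : coneHull s ⊆ σ :=
  fun _ hx => hx σ ⟨hσ, hs⟩

theorem coneHull_mono {s t : Set V} (h : s ⊆ t) : coneHull s ⊆ coneHull t :=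
  coneHull_min (isCone_coneHull t) (h.trans (subset_coneHull t))

theorem coneHull_eq_self {σ : Set V} (hσ : IsCone σ) : coneHull σ = σ :=
  le_antisymm (coneHull_min hσ le_rfl) (subset_coneHull σ)

theorem isCone_inter {σ τ : Set V} (hσ : IsCone σ) (hτ : IsCone τ) : IsCone (σ ∩ τ) :=
  ⟨⟨hσ.1, hτ.1⟩, fun x hx y hy => ⟨hσ.2.1 x hx.1 y hy.1, hτ.2.1 x hx.2 y hy.2⟩,
    fun c hc x hx => ⟨hσ.2.2 c hc x hx.1, hτ.2.2 c hc x hx.2⟩⟩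

theorem isCone_image {W : Type*} [AddCommGroup W] [Module ℝ W] (T : V →ₗ[ℝ] W)
    {σ : Set V} (hσ : IsCone σ) : IsCone (T '' σ) := by
  refine ⟨⟨0, hσ.1, T.map_zero⟩, ?_, ?_⟩
  · rintro _ ⟨x, hx, rfl⟩ _ ⟨y, hy, rfl⟩
    exact ⟨x + y, hσ.2.1 x hx y hy, T.map_add x y⟩
  · rintro c hc _ ⟨x, hx, rfl⟩
    exact ⟨c • x, hσ.2.2 c hc x hx, T.map_smul c x⟩

theorem isCone_preimage {W : Type*} [AddCommGroup W] [Module ℝ W] (T : V →ₗ[ℝ] W)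
    {σ : Set W} (hσ : IsCone σ) : IsCone (T ⁻¹' σ) := by
  refine ⟨?_, ?_, ?_⟩
  · simp only [Set.mem_preimage, T.map_zero]; exact hσ.1
  · intro x hx y hy; simp only [Set.mem_preimage, T.map_add]; exact hσ.2.1 _ hx _ hy
  · intro c hc x hx; simp only [Set.mem_preimage, T.map_smul]; exact hσ.2.2 c hc _ hx

theorem image_coneHull {W : Type*} [AddCommGroup W] [Module ℝ W] (T : V →ₗ[ℝ] W)
    (s : Set V) : T '' coneHull s = coneHull (T '' s) := by
  apply le_antisymm
  · have : coneHull s ⊆ T ⁻¹' (coneHull (T '' s)) :=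
      coneHull_min (isCone_preimage T (isCone_coneHull _))
        (fun x hx => subset_coneHull _ ⟨x, hx, rfl⟩)
    exact Set.image_subset_iff.2 this
  · exact coneHull_min (isCone_image T (isCone_coneHull s)) (Set.image_mono (subset_coneHull s))

theorem sum_mem_cone {σ : Set V} (hσ : IsCone σ) {ι : Type*} (A : Finset ι)
    (c : ι → ℝ) (g : ι → V) (hc : ∀ a ∈ A, 0 ≤ c a) (hg : ∀ a ∈ A, g a ∈ σ) :
    ∑ a ∈ A, c a • g a ∈ σ := by
  classical
  induction A using Finset.induction_on with
  | empty => simpa using hσ.1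
  | @insert a A ha ih =>
      rw [Finset.sum_insert ha]
      exact hσ.2.1 _ (hσ.2.2 _ (hc a (Finset.mem_insert_self a A)) _
        (hg a (Finset.mem_insert_self a A)))
        _ (ih (fun b hb => hc b (Finset.mem_insert_of_mem hb))
          (fun b hb => hg b (Finset.mem_insert_of_mem hb)))

/-- Representation of the cone hull of a finite set. -/
theorem coneHull_finset_eq (A : Finset V) :
    coneHull (A : Set V) = {x | ∃ c : V → ℝ, (∀ a, 0 ≤ c a) ∧ x = ∑ a ∈ A, c a • a} := by
  classical
  apply le_antisymm
  · apply coneHull_min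
    · refine ⟨⟨fun _ => 0, fun _ => le_rfl, by simp⟩, ?_, ?_⟩
      · rintro x ⟨c, hc, rfl⟩ y ⟨d, hd, rfl⟩
        exact ⟨c + d, fun a => add_nonneg (hc a) (hd a), by
          simp [add_smul, Finset.sum_add_distrib]⟩
      · rintro t ht x ⟨c, hc, rfl⟩
        exact ⟨fun a => t * c a, fun a => mul_nonneg ht (hc a), by
          simp [Finset.smul_sum, mul_smul]⟩
    · intro a ha
      refine ⟨fun b => if b = a then 1 else 0, fun b => by positivity, ?_⟩
      rw [Finset.sum_eq_single a]
      · simp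
      · intro b _ hb; simp [hb]
      · intro h; exact absurd ha h
  · rintro x ⟨c, hc, rfl⟩
    exact sum_mem_cone (isCone_coneHull _) A c id (fun a _ => hc a)
      (fun a ha => subset_coneHull _ ha)

end Basics
section Faces

variable {V : Type*} [AddCommGroup V] [Module ℝ V]

theorem isFaceOf_self {σ : Set V} (hσ : IsCone σ) : IsFaceOf σ σ :=
  ⟨hσ, le_rfl, fun _ hx _ hy _ => ⟨hx, hy⟩⟩

theorem IsFaceOf.trans {τ ρ σ : Set V} (h1 : IsFaceOf τ ρ) (h2 : IsFaceOf ρ σ) :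
    IsFaceOf τ σ := by
  refine ⟨h1.1, h1.2.1.trans h2.2.1, fun x hx y hy hxy => ?_⟩
  obtain ⟨hx', hy'⟩ := h2.2.2 x hx y hy (h1.2.1 hxy)
  exact h1.2.2 x hx' y hy' hxy

theorem isFaceOf_inter {τ₁ τ₂ σ : Set V} (h1 : IsFaceOf τ₁ σ) (h2 : IsFaceOf τ₂ σ) :
    IsFaceOf (τ₁ ∩ τ₂) σ :=
  ⟨isCone_inter h1.1 h2.1, fun x hx => h1.2.1 hx.1, fun x hx y hy hxy =>
    ⟨⟨(h1.2.2 x hx y hy hxy.1).1, (h2.2.2 x hx y hy hxy.2).1⟩,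
     ⟨(h1.2.2 x hx y hy hxy.1).2, (h2.2.2 x hx y hy hxy.2).2⟩⟩⟩

/-- An intersection of two faces of the same cone is a face of each of them. -/
theorem isFaceOf_inter_left {τ₁ τ₂ σ : Set V} (h1 : IsFaceOf τ₁ σ) (h2 : IsFaceOf τ₂ σ) :
    IsFaceOf (τ₁ ∩ τ₂) τ₁ := by
  refine ⟨isCone_inter h1.1 h2.1, Set.inter_subset_left, fun x hx y hy hxy => ?_⟩
  have hx' := h1.2.1 hx
  have hy' := h1.2.1 hy
  obtain ⟨ha, hb⟩ := h2.2.2 x hx' y hy' hxy.2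
  exact ⟨⟨hx, ha⟩, ⟨hy, hb⟩⟩

/-- Restriction: a face of `σ` intersected with a subcone `ρ ⊆ σ` is a face of `ρ`. -/
theorem isFaceOf_inter_subcone {τ σ ρ : Set V} (h : IsFaceOf τ σ) (hρσ : ρ ⊆ σ)
    (hρ : IsCone ρ) : IsFaceOf (τ ∩ ρ) ρ := by
  refine ⟨isCone_inter h.1 hρ, Set.inter_subset_right, fun x hx y hy hxy => ?_⟩
  obtain ⟨ha, hb⟩ := h.2.2 x (hρσ hx) y (hρσ hy) hxy.1
  exact ⟨⟨ha, hx⟩, ⟨hb, hy⟩⟩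

open Classical in
/-- Key structure result: a face of a finitely generated cone is the cone hull of the
generators it contains. -/
theorem face_eq_coneHull_filter (A : Finset V) {τ : Set V}
    (h : IsFaceOf τ (coneHull (A : Set V))) :
    τ = coneHull ((A.filter (fun a => a ∈ τ) : Finset V) : Set V) := by
  classical
  apply le_antisymm
  · intro x hx
    have hx' : x ∈ coneHull (A : Set V) := h.2.1 hx
    rw [coneHull_finset_eq] at hx'
    obtain ⟨c, hc, rfl⟩ := hx'
    -- each summand `c a • a` lies in `τ`
    have key : ∀ B : Finset V, B ⊆ A → (∑ a ∈ B, c a • a) ∈ τ →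
        ∀ a ∈ B, c a • a ∈ τ := by
      intro B
      induction B using Finset.induction_on with
      | empty => intro _ _ a ha; exact absurd ha (Finset.notMem_empty a)
      | @insert b B hb ih =>
          intro hBA hsum a ha
          rw [Finset.sum_insert hb] at hsum
          have h1 : c b • b ∈ coneHull (A : Set V) :=
            (isCone_coneHull _).2.2 _ (hc b) _
              (subset_coneHull _ (hBA (Finset.mem_insert_self b B)))
          have h2 : (∑ a ∈ B, c a • a) ∈ coneHull (A : Set V) :=
            sum_mem_cone (isCone_coneHull _) B c id (fun a _ => hc a)
              (fun a haB => subset_coneHull _ (hBA (Finset.mem_insert_of_mem haB)))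
          obtain ⟨hb1, hb2⟩ := h.2.2 _ h1 _ h2 hsum
          rcases Finset.mem_insert.1 ha with rfl | haB
          · exact hb1
          · exact ih (fun y hy => hBA (Finset.mem_insert_of_mem hy)) hb2 a haB
    have hterm := key A le_rfl hx
    have hmem : ∀ a ∈ A, c a ≠ 0 → a ∈ τ := by
      intro a ha hca
      have hpos : 0 < c a := lt_of_le_of_ne (hc a) (Ne.symm hca)
      have h1 : (c a)⁻¹ • (c a • a) ∈ τ :=
        h.1.2.2 _ (inv_nonneg.2 hpos.le) _ (hterm a ha)
      rwa [smul_smul, inv_mul_cancel₀ hca, one_smul] at h1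
    have hsplit : (∑ a ∈ A, c a • a) = ∑ a ∈ A.filter (fun a => a ∈ τ), c a • a := by
      rw [← Finset.sum_filter_add_sum_filter_not A (fun a => a ∈ τ)]
      have hz : ∑ a ∈ A.filter (fun a => ¬ a ∈ τ), c a • a = 0 := by
        apply Finset.sum_eq_zero
        intro a ha
        rw [Finset.mem_filter] at ha
        by_cases hca : c a = 0
        · simp [hca]
        · exact absurd (hmem a ha.1 hca) ha.2
      rw [hz, add_zero]
    rw [hsplit, coneHull_finset_eq]
    exact ⟨c, hc, rfl⟩
  · exact coneHull_min h.1 (fun a ha => (Finset.mem_filter.1 ha).2)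

/-- There are only finitely many faces of a finitely generated cone. -/
theorem face_eq_coneHull_inter (A : Finset V) {τ : Set V}
    (h : IsFaceOf τ (coneHull (A : Set V))) :
    τ = coneHull ((A : Set V) ∩ τ) := by
  classical
  conv_lhs => rw [face_eq_coneHull_filter A h]
  have hcoe : ((A.filter (fun a => a ∈ τ) : Finset V) : Set V) = ((A : Set V) ∩ τ) := by
    ext x; simp
  rw [hcoe]

theorem finite_faces (A : Finset V) :
    {τ : Set V | IsFaceOf τ (coneHull (A : Set V))}.Finite := by
  classical
  have hsub : {τ : Set V | IsFaceOf τ (coneHull (A : Set V))} ⊆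
      (fun B : Finset V => coneHull (B : Set V)) '' (A.powerset : Set (Finset V)) := by
    intro τ hτ
    refine ⟨A.filter (fun a => a ∈ τ), ?_, (face_eq_coneHull_filter A hτ).symm⟩
    simp only [Finset.coe_powerset, Set.mem_preimage, Set.mem_powerset_iff, Finset.coe_subset]
    exact A.filter_subset _
  exact Set.Finite.subset (Set.Finite.image _ A.powerset.finite_toSet) hsub

end Faces
section Qint

variable {V : Type*} [AddCommGroup V] [Module ℝ V]

/-- The quasi-interior of a cone: points from which one can move backwards a little
in any direction of the cone. For finitely generated cones this is the relative
interior. -/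
def qint (D : Set V) : Set V :=
  {x | x ∈ D ∧ ∀ a ∈ D, ∃ ε : ℝ, 0 < ε ∧ x - ε • a ∈ D}

theorem qint_subset (D : Set V) : qint D ⊆ D := fun _ hx => hx.1

theorem qint_add_mem {D : Set V} (hD : IsCone D) {x d : V} (hx : x ∈ qint D)
    (hd : d ∈ D) : x + d ∈ qint D := by
  refine ⟨hD.2.1 _ hx.1 _ hd, fun a ha => ?_⟩
  obtain ⟨ε, hε, hεa⟩ := hx.2 a ha
  exact ⟨ε, hε, by
    have : x + d - ε • a = (x - ε • a) + d := by abel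
    rw [this]; exact hD.2.1 _ hεa _ hd⟩

theorem qint_smul_mem {D : Set V} (hD : IsCone D) {x : V} {t : ℝ} (hx : x ∈ qint D)
    (ht : 0 < t) : t • x ∈ qint D := by
  refine ⟨hD.2.2 t ht.le _ hx.1, fun a ha => ?_⟩
  obtain ⟨ε, hε, hεa⟩ := hx.2 a ha
  refine ⟨t * ε, mul_pos ht hε, ?_⟩
  have : t • x - (t * ε) • a = t • (x - ε • a) := by
    rw [smul_sub, smul_smul]
  rw [this]
  exact hD.2.2 t ht.le _ hεa

theorem qint_convex {D : Set V} (hD : IsCone D) : Convex ℝ (qint D) := by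
  intro x hx y hy s t hs ht hst
  rcases eq_or_lt_of_le hs with rfl | hs'
  · simp only [zero_smul, zero_add] at hst ⊢
    rw [hst, one_smul]; exact hy
  rcases eq_or_lt_of_le ht with rfl | ht'
  · simp only [zero_smul, add_zero] at hst ⊢
    rw [hst, one_smul]; exact hx
  exact qint_add_mem hD (qint_smul_mem hD hx hs') (hD.2.2 t ht _ (qint_subset D hy))

theorem qint_image {W : Type*} [AddCommGroup W] [Module ℝ W] (T : V →ₗ[ℝ] W)
    {D : Set V} {x : V} (hx : x ∈ qint D) : T x ∈ qint (T '' D) := by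
  refine ⟨⟨x, hx.1, rfl⟩, ?_⟩
  rintro _ ⟨a, ha, rfl⟩
  obtain ⟨ε, hε, hεa⟩ := hx.2 a ha
  exact ⟨ε, hε, ⟨x - ε • a, hεa, by rw [map_sub, map_smul]⟩⟩

/-- The sum of the generators is a quasi-interior point. -/
theorem sum_mem_qint (A : Finset V) : (∑ a ∈ A, a) ∈ qint (coneHull (A : Set V)) := by
  classical
  constructor
  · have : (∑ a ∈ A, a) = ∑ a ∈ A, (1:ℝ) • a := by simp
    rw [this]
    exact sum_mem_cone (isCone_coneHull _) A 1 id (fun _ _ => zero_le_one)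
      (fun a ha => subset_coneHull _ ha)
  · intro d hd
    rw [coneHull_finset_eq] at hd
    obtain ⟨c, hc, rfl⟩ := hd
    set M : ℝ := 1 + ∑ a ∈ A, c a with hM
    have hMpos : 0 < M := by
      have : 0 ≤ ∑ a ∈ A, c a := Finset.sum_nonneg (fun a _ => hc a)
      linarith
    refine ⟨M⁻¹, inv_pos.2 hMpos, ?_⟩
    have heq : (∑ a ∈ A, a) - M⁻¹ • ∑ a ∈ A, c a • a
        = ∑ a ∈ A, (1 - M⁻¹ * c a) • a := by
      rw [Finset.smul_sum, ← Finset.sum_sub_distrib]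
      congr 1; ext a
      rw [sub_smul, one_smul, smul_smul]
    rw [heq, coneHull_finset_eq]
    refine ⟨fun a => if a ∈ A then 1 - M⁻¹ * c a else 0, fun a => ?_, ?_⟩
    · by_cases ha : a ∈ A
      · simp only [ha, if_true]
        have hle : c a ≤ M := by
          have h1 : c a ≤ ∑ a ∈ A, c a := Finset.single_le_sum (fun a _ => hc a) ha
          linarith
        have : M⁻¹ * c a ≤ M⁻¹ * M := by
          apply mul_le_mul_of_nonneg_left hle (inv_nonneg.2 hMpos.le)
        rw [inv_mul_cancel₀ hMpos.ne'] at this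
        linarith
      · simp [ha]
    · apply Finset.sum_congr rfl
      intro a ha; simp [ha]

/-- The forcing lemma: if a quasi-interior point of `D ⊆ τ₁` lies in `τ₂`, and
`τ₁ ∩ τ₂` is a face of `τ₁`, then all of `D` lies in `τ₂`. -/
theorem qint_force {τ₁ τ₂ D : Set V} (hτ₁ : IsCone τ₁) (hτ₂ : IsCone τ₂)
    (hface : IsFaceOf (τ₁ ∩ τ₂) τ₁) (hD : D ⊆ τ₁) {x : V}
    (hx : x ∈ qint D) (hx2 : x ∈ τ₂) : D ⊆ τ₂ := by
  intro a ha
  obtain ⟨ε, hε, hεa⟩ := hx.2 a ha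
  have h1 : x - ε • a ∈ τ₁ := hD hεa
  have h2 : ε • a ∈ τ₁ := hτ₁.2.2 ε hε.le _ (hD ha)
  have h3 : (x - ε • a) + ε • a ∈ τ₁ ∩ τ₂ := by
    rw [sub_add_cancel]
    exact ⟨hD hx.1, hx2⟩
  have h4 : ε • a ∈ τ₁ ∩ τ₂ := (hface.2.2 _ h1 _ h2 h3).2
  have h5 : ε⁻¹ • (ε • a) ∈ τ₂ := hτ₂.2.2 _ (inv_nonneg.2 hε.le) _ h4.2
  rwa [smul_smul, inv_mul_cancel₀ hε.ne', one_smul] at h5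

end Qint

section ToR

theorem toR_injective {n : ℕ} : Function.Injective (toR (n := n)) := by
  intro v w h
  funext i
  have h2 : (v i : ℝ) = (w i : ℝ) := congrFun h i
  exact_mod_cast h2

theorem toR_map {n : ℕ} (v w : Fin n → ℤ) (a b : ℤ) :
    toR (a • v + b • w) = (a : ℝ) • toR v + (b : ℝ) • toR w := by
  funext i; simp [toR]

theorem extR_toR {n m : ℕ} (F : (Fin n → ℤ) →ₗ[ℤ] (Fin m → ℤ)) (v : Fin n → ℤ) :
    extR F (toR v) = toR (F v) := by
  funext i
  have hv : F v = F (∑ j, v j • Pi.single j 1) := by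
    congr 1
    funext j
    simp [Finset.sum_apply, Pi.single_apply]
  simp only [extR, Matrix.mulVecLin_apply, Matrix.mulVec, dotProduct, Matrix.of_apply]
  rw [hv, map_sum]
  simp only [map_smul, toR, Finset.sum_apply, Pi.smul_apply, smul_eq_mul]
  push_cast
  exact Finset.sum_congr rfl (fun j _ => mul_comm _ _)

/-- Image of a rational cone under `extR`. -/
theorem extR_image_coneHull {n m : ℕ} (F : (Fin n → ℤ) →ₗ[ℤ] (Fin m → ℤ))
    (s : Finset (Fin n → ℤ)) :
    extR F '' coneHull (toR '' (s : Set (Fin n → ℤ)))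
      = coneHull (toR '' ((s.image F : Finset (Fin m → ℤ)) : Set (Fin m → ℤ))) := by
  rw [image_coneHull]
  congr 1
  rw [Finset.coe_image, ← Set.image_comp, ← Set.image_comp]
  exact Set.image_congr (fun v _ => extR_toR F v)

end ToR
section Separation

open Module

/-- Separation: a nonempty convex set inside a subspace `W` avoiding `0` can be weakly
separated from `0` by a vector of `W` itself. -/
theorem exists_separating {m : ℕ} {K : Set (Fin m → ℝ)} (hK : Convex ℝ K)
    (h0 : (0 : Fin m → ℝ) ∉ K) (hne : K.Nonempty) {W : Submodule ℝ (Fin m → ℝ)}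
    (hKW : K ⊆ (W : Set (Fin m → ℝ))) :
    ∃ v : Fin m → ℝ, v ∈ W ∧ v ≠ 0 ∧ ∀ k ∈ K, 0 ≤ ∑ i, v i * k i := by
  classical
  set E := EuclideanSpace ℝ (Fin m)
  let e : (Fin m → ℝ) ≃ₗ[ℝ] E := (WithLp.linearEquiv 2 ℝ (Fin m → ℝ)).symm
  have he : ∀ x : Fin m → ℝ, ∀ i, (e x) i = x i := fun x i => rfl
  set K' : Set E := e '' K with hK'
  set W' : Submodule ℝ E := W.map e.toLinearMap with hW'
  have hK'conv : Convex ℝ K' := hK.linear_image e.toLinearMap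
  have hK'0 : (0 : E) ∉ K' := by
    rintro ⟨x, hx, hx0⟩
    have hx' : x = 0 := e.injective (by rw [hx0, map_zero])
    exact h0 (hx' ▸ hx)
  have hK'W : K' ⊆ (W' : Set E) := by
    rintro _ ⟨x, hx, rfl⟩
    exact ⟨x, hKW hx, rfl⟩
  have hK'ne : K'.Nonempty := hne.image e
  -- the compact search space: unit sphere of W'
  set Sp : Set E := {u : E | ‖u‖ = 1 ∧ u ∈ W'} with hSp
  have hSpcl : IsClosed Sp := by
    apply IsClosed.inter
    · exact isClosed_eq continuous_norm continuous_const
    · exact W'.closed_of_finiteDimensional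
  have hSpbd : Bornology.IsBounded Sp := by
    apply Bornology.IsBounded.subset (Metric.isBounded_closedBall (x := (0:E)) (r := 1))
    intro u hu
    simp only [Metric.mem_closedBall, dist_zero_right]
    exact le_of_eq hu.1
  have hSpcompact : IsCompact Sp := Metric.isCompact_of_isClosed_isBounded hSpcl hSpbd
  -- closed constraint sets
  set T : K' → Set E := fun k => {u : E | 0 ≤ (inner ℝ u (k : E) : ℝ)} with hT
  have hTcl : ∀ k, IsClosed (T k) := by
    intro k
    exact isClosed_le continuous_const (Continuous.inner continuous_id continuous_const)
  -- every finite subfamily has a common point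
  have hfin : ∀ u : Finset K', (Sp ∩ ⋂ k ∈ u, T k).Nonempty := by
    intro u
    rcases u.eq_empty_or_nonempty with rfl | hune
    · obtain ⟨k₀, hk₀⟩ := hK'ne
      have hk₀0 : k₀ ≠ 0 := fun h => hK'0 (h ▸ hk₀)
      refine ⟨‖k₀‖⁻¹ • k₀, ⟨?_, ?_⟩, by simp⟩
      · rw [norm_smul, norm_inv, norm_norm, inv_mul_cancel₀ (norm_ne_zero_iff.2 hk₀0)]
      · exact W'.smul_mem _ (hK'W hk₀)
    · set F : Set E := (↑) '' (u : Set K') with hF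
      have hFfin : F.Finite := (u.finite_toSet).image _
      have hFK : F ⊆ K' := by rintro _ ⟨k, _, rfl⟩; exact k.2
      have hhullK : convexHull ℝ F ⊆ K' := convexHull_min hFK hK'conv
      have hhull0 : (0 : E) ∉ convexHull ℝ F := fun h => hK'0 (hhullK h)
      have hcpt : IsCompact (convexHull ℝ F) := hFfin.isCompact_convexHull ℝ
      obtain ⟨f, c, hfc, hc0⟩ := geometric_hahn_banach_closed_point
        (convex_convexHull ℝ F) hcpt.isClosed hhull0
      rw [map_zero] at hc0
      set z : E := (InnerProductSpace.toDual ℝ E).symm f with hz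
      have hzf : ∀ y : E, (inner ℝ z y : ℝ) = f y := fun y =>
        InnerProductSpace.toDual_symm_apply
      set p : E := ↑(W'.orthogonalProjectionOnto z) with hp
      have hinner : ∀ k ∈ F, (inner ℝ p k : ℝ) = f k := by
        intro k hk
        have horth : z - p ∈ W'ᗮ := W'.sub_starProjection_mem_orthogonal z
        have h1 : (inner ℝ (z - p) k : ℝ) = 0 := by
          rw [real_inner_comm]
          exact horth k (hK'W (hFK hk))
        rw [inner_sub_left] at h1
        have : (inner ℝ p k : ℝ) = inner ℝ z k := by linarith
        rw [this, hzf]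
      have hneg : ∀ k ∈ F, (inner ℝ p k : ℝ) < 0 := by
        intro k hk
        rw [hinner k hk]
        exact lt_trans (hfc k (subset_convexHull ℝ F hk)) hc0
      obtain ⟨k₀, hk₀u⟩ := hune
      have hk₀F : (k₀ : E) ∈ F := ⟨k₀, hk₀u, rfl⟩
      have hpne : p ≠ 0 := by
        intro h
        have := hneg _ hk₀F
        rw [h, inner_zero_left] at this
        exact lt_irrefl 0 this
      refine ⟨(-‖p‖⁻¹) • p, ⟨?_, ?_⟩, ?_⟩
      · rw [norm_smul, norm_neg, norm_inv, norm_norm,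
          inv_mul_cancel₀ (norm_ne_zero_iff.2 hpne)]
      · exact W'.smul_mem _ (W'.orthogonalProjectionOnto z).2
      · simp only [Set.mem_iInter]
        intro k hku
        have : (inner ℝ ((-‖p‖⁻¹) • p) (k : E) : ℝ) = (-‖p‖⁻¹) * inner ℝ p k := by
          rw [real_inner_smul_left]
        simp only [T, Set.mem_setOf_eq, this]
        have h1 : (inner ℝ p (k : E) : ℝ) < 0 := hneg _ ⟨k, hku, rfl⟩
        have h2 : (0:ℝ) < ‖p‖⁻¹ := inv_pos.2 (norm_pos_iff.2 hpne)
        nlinarith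
  -- compactness: a common point for all constraints
  have hglob : (Sp ∩ ⋂ k, T k).Nonempty := by
    by_contra hempty
    rw [Set.not_nonempty_iff_eq_empty] at hempty
    obtain ⟨u, hu⟩ := hSpcompact.elim_finite_subfamily_closed T hTcl hempty
    obtain ⟨x, hx⟩ := hfin u
    rw [hu] at hx
    exact hx
  obtain ⟨v', ⟨hv'n, hv'W⟩, hv'T⟩ := hglob
  obtain ⟨v, hvW, rfl⟩ := hv'W
  refine ⟨v, hvW, ?_, ?_⟩
  · intro h
    rw [h, map_zero, norm_zero] at hv'n
    exact one_ne_zero hv'n.symm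
  · intro k hk
    have hkT : e.toLinearMap v ∈ T ⟨e k, ⟨k, hk, rfl⟩⟩ := by
      simp only [Set.mem_iInter] at hv'T
      exact hv'T _
    have : (inner ℝ (e.toLinearMap v) (e k) : ℝ) = ∑ i, v i * k i := by
      rw [PiLp.inner_apply]
      apply Finset.sum_congr rfl
      intro i _
      simp only [RCLike.inner_apply, conj_trivial]
      exact mul_comm _ _
    rw [hT] at hkT
    simp only [Set.mem_setOf_eq] at hkT
    rw [this] at hkT
    exact hkT

end Separation
section Fixpoint

open Module Pointwise

/-- The linear functional `x ↦ ∑ i, v i * x i`. -/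
def dotL {m : ℕ} (v : Fin m → ℝ) : (Fin m → ℝ) →ₗ[ℝ] ℝ where
  toFun x := ∑ i, v i * x i
  map_add' x y := by simp [mul_add, Finset.sum_add_distrib]
  map_smul' c x := by simp [Finset.mul_sum, mul_left_comm]

theorem dotL_self_pos {m : ℕ} {v : Fin m → ℝ} (hv : v ≠ 0) : 0 < dotL v v := by
  have hex : ∃ i, v i ≠ 0 := by
    by_contra h
    push_neg at h
    exact hv (funext h)
  obtain ⟨i, hi⟩ := hex
  have : (0:ℝ) < v i * v i := mul_self_pos.2 hi
  exact Finset.sum_pos' (fun j _ => mul_self_nonneg (v j)) ⟨i, Finset.mem_univ i, this⟩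

/-- `D ∩ {f = 0}` is a face of `D` when `f ≥ 0` on `D`. -/
theorem isFaceOf_ker_inter {m : ℕ} {D : Set (Fin m → ℝ)} (hD : IsCone D)
    (f : (Fin m → ℝ) →ₗ[ℝ] ℝ) (hf : ∀ x ∈ D, 0 ≤ f x) :
    IsFaceOf (D ∩ {x | f x = 0}) D := by
  constructor
  · refine ⟨⟨hD.1, by simp⟩, ?_, ?_⟩
    · rintro x ⟨hx, hfx⟩ y ⟨hy, hfy⟩
      refine ⟨hD.2.1 x hx y hy, ?_⟩
      simp only [Set.mem_setOf_eq] at hfx hfy ⊢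
      rw [map_add, hfx, hfy, add_zero]
    · rintro c hc x ⟨hx, hfx⟩
      refine ⟨hD.2.2 c hc x hx, ?_⟩
      simp only [Set.mem_setOf_eq] at hfx ⊢
      rw [map_smul, hfx, smul_eq_mul, mul_zero]
  refine ⟨Set.inter_subset_left, ?_⟩
  rintro x hx y hy ⟨hxy, hfxy⟩
  simp only [Set.mem_setOf_eq] at hfxy
  rw [map_add] at hfxy
  have h1 := hf x hx
  have h2 := hf y hy
  refine ⟨⟨hx, ?_⟩, ⟨hy, ?_⟩⟩ <;> · simp only [Set.mem_setOf_eq]; linarith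

/-- If two finitely generated cones form a "fixpoint pair" (no quasi-interior point
of a face of one lies in the other, except when the face is entirely contained in
the other), then their intersection is a face of the first. -/
theorem fixpoint_faces {m : ℕ} : ∀ (d : ℕ) (A A' : Finset (Fin m → ℝ)),
    Module.finrank ℝ (Submodule.span ℝ
      (coneHull (A : Set (Fin m → ℝ)) ∪ coneHull (A' : Set (Fin m → ℝ)))) ≤ d →
    (∀ F, IsFaceOf F (coneHull (A : Set (Fin m → ℝ))) →
      (qint F ∩ coneHull (A' : Set (Fin m → ℝ))).Nonempty →
      F ⊆ coneHull (A' : Set (Fin m → ℝ))) →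
    (∀ F, IsFaceOf F (coneHull (A' : Set (Fin m → ℝ))) →
      (qint F ∩ coneHull (A : Set (Fin m → ℝ))).Nonempty →
      F ⊆ coneHull (A : Set (Fin m → ℝ))) →
    IsFaceOf (coneHull (A : Set (Fin m → ℝ)) ∩ coneHull (A' : Set (Fin m → ℝ)))
      (coneHull (A : Set (Fin m → ℝ))) := by
  intro d
  induction d using Nat.strong_induction_on with
  | _ d IH =>
  intro A A' hrank hfix hfix'
  classical
  set D := coneHull (A : Set (Fin m → ℝ)) with hD
  set D' := coneHull (A' : Set (Fin m → ℝ)) with hD'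
  have hDcone : IsCone D := isCone_coneHull _
  have hD'cone : IsCone D' := isCone_coneHull _
  by_cases h1 : (qint D ∩ D').Nonempty
  · have hsub : D ⊆ D' := hfix D (isFaceOf_self hDcone) h1
    rw [Set.inter_eq_self_of_subset_left hsub]
    exact isFaceOf_self hDcone
  · rw [Set.not_nonempty_iff_eq_empty] at h1
    -- separation
    set K : Set (Fin m → ℝ) := qint D - qint D' with hK
    have hKconv : Convex ℝ K := (qint_convex hDcone).sub (qint_convex hD'cone)
    have hp₀ : (∑ a ∈ A, a) ∈ qint D := sum_mem_qint A
    have hq₀ : (∑ a ∈ A', a) ∈ qint D' := sum_mem_qint A'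
    have hKne : K.Nonempty := ⟨_, Set.sub_mem_sub hp₀ hq₀⟩
    have hK0 : (0 : Fin m → ℝ) ∉ K := by
      intro h
      rw [Set.mem_sub] at h
      obtain ⟨p, hp, q, hq, hpq⟩ := h
      have : p = q := by rwa [sub_eq_zero] at hpq
      have : p ∈ qint D ∩ D' := ⟨hp, this ▸ qint_subset D' hq⟩
      rw [h1] at this
      exact this
    set W : Submodule ℝ (Fin m → ℝ) := Submodule.span ℝ (D ∪ D') with hW
    have hKW : K ⊆ (W : Set (Fin m → ℝ)) := by
      intro x hx
      rw [hK, Set.mem_sub] at hx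
      obtain ⟨p, hp, q, hq, rfl⟩ := hx
      exact W.sub_mem
        (Submodule.subset_span (Set.mem_union_left _ (qint_subset _ hp)))
        (Submodule.subset_span (Set.mem_union_right _ (qint_subset _ hq)))
    obtain ⟨v, hvW, hvne, hvK⟩ := exists_separating hKconv hK0 hKne hKW
    set f := dotL v with hf
    have hfK : ∀ p ∈ qint D, ∀ q ∈ qint D', f q ≤ f p := by
      intro p hp q hq
      have := hvK _ (Set.sub_mem_sub hp hq)
      have heq : f (p - q) = f p - f q := map_sub f p q
      have : (0:ℝ) ≤ f (p - q) := this
      rw [heq] at this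
      linarith
    -- signs on the quasi-interiors
    have hfqneg : ∀ q ∈ qint D', f q ≤ 0 := by
      intro q hq
      by_contra hpos
      push_neg at hpos
      set t : ℝ := (|f (∑ a ∈ A, a)| + 1) / f q with ht
      have htpos : 0 < t := div_pos (by positivity) hpos
      have := hfK _ hp₀ _ (qint_smul_mem hD'cone hq htpos)
      rw [map_smul, smul_eq_mul] at this
      rw [ht] at this
      rw [div_mul_cancel₀ _ hpos.ne'] at this
      have habs : f (∑ a ∈ A, a) ≤ |f (∑ a ∈ A, a)| := le_abs_self _
      linarith
    have hfppos : ∀ p ∈ qint D, 0 ≤ f p := by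
      intro p hp
      by_contra hneg
      push_neg at hneg
      set t : ℝ := (-(|f (∑ a ∈ A', a)| + 1)) / f p with ht
      have htpos : 0 < t := div_pos_of_neg_of_neg
        (by have := abs_nonneg (f (∑ a ∈ A', a)); linarith) hneg
      have := hfK _ (qint_smul_mem hDcone hp htpos) _ hq₀
      rw [map_smul, smul_eq_mul, ht, div_mul_cancel₀ _ hneg.ne] at this
      have habs : -(|f (∑ a ∈ A', a)|) ≤ f (∑ a ∈ A', a) := neg_abs_le _
      linarith
    -- extend the signs to the cones themselves
    have hfD : ∀ x ∈ D, 0 ≤ f x := by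
      intro x hx
      by_contra hneg
      push_neg at hneg
      set t : ℝ := (f (∑ a ∈ A, a) + 1) / (-(f x)) with ht
      have hfp0 : 0 ≤ f (∑ a ∈ A, a) := hfppos _ hp₀
      have htpos : 0 < t := div_pos (by linarith) (by linarith)
      have hmem : (∑ a ∈ A, a) + t • x ∈ qint D :=
        qint_add_mem hDcone hp₀ (hDcone.2.2 t htpos.le x hx)
      have := hfppos _ hmem
      rw [map_add, map_smul, smul_eq_mul, ht] at this
      rw [div_mul_eq_mul_div, mul_comm, ← div_mul_eq_mul_div] at this
      have hx' : f x / (-(f x)) = -1 := by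
        rw [div_neg, div_self hneg.ne]
      rw [hx'] at this
      linarith
    have hfD' : ∀ x ∈ D', f x ≤ 0 := by
      intro x hx
      by_contra hpos
      push_neg at hpos
      set t : ℝ := (-(f (∑ a ∈ A', a)) + 1) / f x with ht
      have hfq0 : f (∑ a ∈ A', a) ≤ 0 := hfqneg _ hq₀
      have htpos : 0 < t := div_pos (by linarith) hpos
      have hmem : (∑ a ∈ A', a) + t • x ∈ qint D' :=
        qint_add_mem hD'cone hq₀ (hD'cone.2.2 t htpos.le x hx)
      have := hfqneg _ hmem
      rw [map_add, map_smul, smul_eq_mul, ht, div_mul_cancel₀ _ hpos.ne'] at this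
      linarith
    -- the sub-faces cut out by `f`
    set D₀ : Set (Fin m → ℝ) := D ∩ {x | f x = 0} with hD₀
    set D'₀ : Set (Fin m → ℝ) := D' ∩ {x | f x = 0} with hD'₀
    have hD₀face : IsFaceOf D₀ D := isFaceOf_ker_inter hDcone f hfD
    have hD'₀face : IsFaceOf D'₀ D' := by
      have := isFaceOf_ker_inter hD'cone (-f) (fun x hx => by
        simp only [LinearMap.neg_apply, neg_nonneg]; exact hfD' x hx)
      convert this using 2
      ext x
      simp
    set A₀ : Finset (Fin m → ℝ) := A.filter (fun a => a ∈ D₀) with hA₀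
    set A'₀ : Finset (Fin m → ℝ) := A'.filter (fun a => a ∈ D'₀) with hA'₀
    have hA₀coe : (A₀ : Set (Fin m → ℝ)) = (A : Set (Fin m → ℝ)) ∩ D₀ := by
      ext x; simp [hA₀]
    have hA₀eq : coneHull (A₀ : Set (Fin m → ℝ)) = D₀ := by
      rw [hA₀coe]; exact (face_eq_coneHull_inter A hD₀face).symm
    have hA'₀coe : (A'₀ : Set (Fin m → ℝ)) = (A' : Set (Fin m → ℝ)) ∩ D'₀ := by
      ext x; simp [hA'₀]
    have hA'₀eq : coneHull (A'₀ : Set (Fin m → ℝ)) = D'₀ := by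
      rw [hA'₀coe]; exact (face_eq_coneHull_inter A' hD'₀face).symm
    -- rank drop
    set W₀ : Submodule ℝ (Fin m → ℝ) := Submodule.span ℝ
      (coneHull (A₀ : Set (Fin m → ℝ)) ∪ coneHull (A'₀ : Set (Fin m → ℝ))) with hW₀
    have hW₀le : W₀ ≤ W := by
      rw [hW₀, hA₀eq, hA'₀eq]
      apply Submodule.span_mono
      exact Set.union_subset_union Set.inter_subset_left Set.inter_subset_left
    have hvnotW₀ : v ∉ W₀ := by
      intro hv
      have hker : W₀ ≤ LinearMap.ker f := by
        rw [hW₀, hA₀eq, hA'₀eq]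
        rw [Submodule.span_le]
        rintro x (⟨_, hx⟩ | ⟨_, hx⟩) <;> exact hx
      have : f v = 0 := hker hv
      have := dotL_self_pos hvne
      rw [← hf] at this
      linarith
    have hlt : W₀ < W := lt_of_le_of_ne hW₀le (fun h => hvnotW₀ (h ▸ hvW))
    have hrank₀ : finrank ℝ W₀ < d :=
      lt_of_lt_of_le (Submodule.finrank_lt_finrank_of_lt hlt) hrank
    -- transfer the fixpoint hypotheses
    have hfix₀ : ∀ F, IsFaceOf F (coneHull (A₀ : Set (Fin m → ℝ))) →
        (qint F ∩ coneHull (A'₀ : Set (Fin m → ℝ))).Nonempty →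
        F ⊆ coneHull (A'₀ : Set (Fin m → ℝ)) := by
      intro F hF hne
      rw [hA₀eq] at hF
      rw [hA'₀eq] at hne ⊢
      have hFD : IsFaceOf F D := hF.trans hD₀face
      have hne' : (qint F ∩ D').Nonempty := hne.mono
        (Set.inter_subset_inter_right _ Set.inter_subset_left)
      have hFD' : F ⊆ D' := hfix F hFD hne'
      intro x hx
      exact ⟨hFD' hx, (hF.2.1 hx).2⟩
    have hfix'₀ : ∀ F, IsFaceOf F (coneHull (A'₀ : Set (Fin m → ℝ))) →
        (qint F ∩ coneHull (A₀ : Set (Fin m → ℝ))).Nonempty →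
        F ⊆ coneHull (A₀ : Set (Fin m → ℝ)) := by
      intro F hF hne
      rw [hA'₀eq] at hF
      rw [hA₀eq] at hne ⊢
      have hFD : IsFaceOf F D' := hF.trans hD'₀face
      have hne' : (qint F ∩ D).Nonempty := hne.mono
        (Set.inter_subset_inter_right _ Set.inter_subset_left)
      have hFD' : F ⊆ D := hfix' F hFD hne'
      intro x hx
      exact ⟨hFD' hx, (hF.2.1 hx).2⟩
    have hIH := IH (finrank ℝ W₀) hrank₀ A₀ A'₀ le_rfl hfix₀ hfix'₀
    rw [hA₀eq, hA'₀eq] at hIH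
    -- identify the intersections
    have hinter : D ∩ D' = D₀ ∩ D'₀ := by
      apply le_antisymm
      · intro x ⟨hx, hx'⟩
        have h1 := hfD x hx
        have h2 := hfD' x hx'
        have : f x = 0 := le_antisymm h2 h1
        exact ⟨⟨hx, this⟩, ⟨hx', this⟩⟩
      · intro x ⟨hx, hx'⟩
        exact ⟨hx.1, hx'.1⟩
    rw [hinter]
    exact hIH.trans hD₀face

end Fixpoint
section Merge

/-- The rational cone spanned by a finite set of lattice vectors. -/
def zcone {m : ℕ} (t : Finset (Fin m → ℤ)) : Set (Fin m → ℝ) :=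
  coneHull (toR '' (t : Set (Fin m → ℤ)))

theorem zcone_mono {m : ℕ} {t s : Finset (Fin m → ℤ)} (h : t ⊆ s) :
    zcone t ⊆ zcone s :=
  coneHull_mono (Set.image_mono h)

theorem isCone_zcone {m : ℕ} (t : Finset (Fin m → ℤ)) : IsCone (zcone t) :=
  isCone_coneHull _

open Classical in
theorem zcone_filter_face {m : ℕ} (t : Finset (Fin m → ℤ)) {F : Set (Fin m → ℝ)}
    (hF : IsFaceOf F (zcone t)) :
    F = zcone (t.filter (fun g => toR g ∈ F)) := by
  have h1 : zcone t = coneHull ((t.image toR : Finset (Fin m → ℝ)) : Set (Fin m → ℝ)) := by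
    rw [Finset.coe_image]; rfl
  rw [h1] at hF
  have hset : toR '' (↑t : Set (Fin m → ℤ)) ∩ F
      = toR '' (↑(t.filter (fun g => toR g ∈ F)) : Set (Fin m → ℤ)) := by
    ext x
    constructor
    · rintro ⟨⟨g, hg, rfl⟩, hxF⟩
      exact ⟨g, by simp only [Finset.coe_filter, Set.mem_setOf_eq]; exact ⟨hg, hxF⟩, rfl⟩
    · rintro ⟨g, hg, rfl⟩
      simp only [Finset.coe_filter, Set.mem_setOf_eq] at hg
      exact ⟨⟨g, hg.1, rfl⟩, hg.2⟩
  calc F = coneHull (((t.image toR : Finset (Fin m → ℝ)) : Set (Fin m → ℝ)) ∩ F) :=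
        face_eq_coneHull_inter _ hF
    _ = coneHull (toR '' (↑t : Set (Fin m → ℤ)) ∩ F) := by rw [Finset.coe_image]
    _ = zcone (t.filter (fun g => toR g ∈ F)) := by rw [hset]; rfl

/-- The fixpoint condition on a family of generator sets. -/
def FixFam {m : ℕ} {ι : Type*} (t : ι → Finset (Fin m → ℤ)) : Prop :=
  ∀ i j (F : Set (Fin m → ℝ)), IsFaceOf F (zcone (t i)) →
    (qint F ∩ zcone (t j)).Nonempty → F ⊆ zcone (t j)

open Classical in
/-- The merging algorithm: any family of finitely generated rational cones can be
enlarged (preserving a mergeability-stable predicate `Good`) to a family satisfying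
the fixpoint condition. -/
theorem merge_alg {m : ℕ} {ι : Type*} [Fintype ι] (U : Finset (Fin m → ℤ))
    (Good : Finset (Fin m → ℤ) → Prop)
    (HG : ∀ (u w : Finset (Fin m → ℤ)) (F : Set (Fin m → ℝ)), Good u → Good w →
      IsFaceOf F (zcone u) → (qint F ∩ zcone w).Nonempty →
      Good (w ∪ u.filter (fun g => toR g ∈ F))) :
    ∀ μ : ℕ, ∀ t : ι → Finset (Fin m → ℤ), (∀ i, t i ⊆ U) → (∀ i, Good (t i)) →
    (∑ i, (U.card - (t i).card)) ≤ μ →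
    ∃ t' : ι → Finset (Fin m → ℤ), (∀ i, zcone (t i) ⊆ zcone (t' i)) ∧
      (∀ i, Good (t' i)) ∧ FixFam t' := by
  intro μ
  induction μ with
  | zero =>
      intro t htU htG hμ
      refine ⟨t, fun i => le_rfl, htG, ?_⟩
      have hall : ∀ i, t i = U := by
        intro i
        apply Finset.eq_of_subset_of_card_le (htU i)
        have : U.card - (t i).card = 0 := by
          have := Finset.sum_eq_zero_iff.1 (Nat.le_zero.1 hμ) i (Finset.mem_univ i)
          exact this
        omega
      intro i j F hF _
      rw [hall j]
      rw [hall i] at hF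
      exact hF.2.1
  | succ μ ih =>
      intro t htU htG hμ
      by_cases hfix : FixFam t
      · exact ⟨t, fun i => le_rfl, htG, hfix⟩
      · simp only [FixFam, not_forall] at hfix
        obtain ⟨i, j, F, hF, hne, hnsub⟩ := hfix
        set tF : Finset (Fin m → ℤ) := (t i).filter (fun g => toR g ∈ F) with htF
        set t'' : ι → Finset (Fin m → ℤ) := Function.update t j (t j ∪ tF) with ht''
        have htFsub : ¬ tF ⊆ t j := by
          intro hsub
          apply hnsub
          rw [zcone_filter_face (t i) hF]
          exact zcone_mono hsub
        obtain ⟨g, hgtF, hgtj⟩ := Finset.not_subset.1 htFsub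
        have hcard : (t j).card < (t j ∪ tF).card := by
          apply Finset.card_lt_card
          constructor
          · exact Finset.subset_union_left
          · intro hsub
            exact hgtj (hsub (Finset.mem_union_right _ hgtF))
        have ht''U : ∀ k, t'' k ⊆ U := by
          intro k
          rcases eq_or_ne k j with rfl | hk
          · rw [ht'', Function.update_self]
            exact Finset.union_subset (htU k)
              ((Finset.filter_subset _ _).trans (htU i))
          · rw [ht'', Function.update_of_ne hk]
            exact htU k
        have ht''G : ∀ k, Good (t'' k) := by
          intro k
          rcases eq_or_ne k j with rfl | hk
          · rw [ht'', Function.update_self]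
            exact HG (t i) (t k) F (htG i) (htG k) hF hne
          · rw [ht'', Function.update_of_ne hk]
            exact htG k
        have hsum : (∑ k, (U.card - (t'' k).card)) ≤ μ := by
          have hlt : (∑ k, (U.card - (t'' k).card)) < ∑ k, (U.card - (t k).card) := by
            apply Finset.sum_lt_sum
            · intro k _
              rcases eq_or_ne k j with rfl | hk
              · rw [ht'', Function.update_self]
                have hsub2 : t k ⊆ t k ∪ tF := Finset.subset_union_left
                have := Finset.card_le_card hsub2
                omega
              · rw [ht'', Function.update_of_ne hk]
            · refine ⟨j, Finset.mem_univ j, ?_⟩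
              rw [ht'', Function.update_self]
              have h1 : (t j ∪ tF).card ≤ U.card := Finset.card_le_card (by
                exact Finset.union_subset (htU j) ((Finset.filter_subset _ _).trans (htU i)))
              omega
          omega
        obtain ⟨t', ht'sub, ht'G, ht'fix⟩ := ih t'' ht''U ht''G hsum
        refine ⟨t', fun k => ?_, ht'G, ht'fix⟩
        refine Set.Subset.trans ?_ (ht'sub k)
        rcases eq_or_ne k j with rfl | hk
        · rw [ht'', Function.update_self]
          exact zcone_mono Finset.subset_union_left
        · rw [ht'', Function.update_of_ne hk]

end Merge
section Projection

theorem exists_projection {n : ℕ} (L : Submodule ℤ (Fin n → ℤ)) (hL : IsPrimitive L) :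
    ∃ (m : ℕ) (P : (Fin n → ℤ) →ₗ[ℤ] (Fin m → ℤ)),
      Function.Surjective P ∧ LinearMap.ker P = L := by
  haveI : Module.Finite ℤ ((Fin n → ℤ) ⧸ L) :=
    Module.Finite.of_surjective L.mkQ (Submodule.Quotient.mk_surjective L)
  haveI : NoZeroSMulDivisors ℤ ((Fin n → ℤ) ⧸ L) := by
    constructor
    intro k x hkx
    by_contra h
    push_neg at h
    obtain ⟨hk, hx⟩ := h
    obtain ⟨v, rfl⟩ := Submodule.Quotient.mk_surjective L x
    apply hx
    rw [Submodule.Quotient.mk_eq_zero]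
    apply hL v k hk
    rw [← Submodule.Quotient.mk_eq_zero]
    rw [show Submodule.Quotient.mk (p := L) (k • v) = k • Submodule.Quotient.mk v from
      Submodule.Quotient.mk_smul L k v]
    exact hkx
  haveI : Module.Free ℤ ((Fin n → ℤ) ⧸ L) := Module.free_of_finite_type_torsion_free'
  set I := Module.Free.ChooseBasisIndex ℤ ((Fin n → ℤ) ⧸ L) with hI
  set b : Module.Basis I ℤ ((Fin n → ℤ) ⧸ L) := Module.Free.chooseBasis ℤ _ with hb
  set m := Fintype.card I with hm
  set E : ((Fin n → ℤ) ⧸ L) ≃ₗ[ℤ] (Fin m → ℤ) :=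
    b.equivFun ≪≫ₗ LinearEquiv.funCongrLeft ℤ ℤ (Fintype.equivFin I).symm with hE
  refine ⟨m, E.toLinearMap.comp L.mkQ, ?_, ?_⟩
  · exact E.surjective.comp (Submodule.Quotient.mk_surjective L)
  · rw [LinearMap.ker_comp, LinearEquiv.ker, Submodule.comap_bot, Submodule.ker_mkQ]

theorem surj_cancel {n m k : ℕ} (P : (Fin n → ℤ) →ₗ[ℤ] (Fin m → ℤ))
    (hP : Function.Surjective P) {G G' : (Fin m → ℤ) →ₗ[ℤ] (Fin k → ℤ)}
    (h : G.comp P = G'.comp P) : G = G' := by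
  apply LinearMap.ext
  intro x
  obtain ⟨y, rfl⟩ := hP x
  exact LinearMap.congr_fun h y

theorem exists_factor {n m k : ℕ} (P : (Fin n → ℤ) →ₗ[ℤ] (Fin m → ℤ))
    (hP : Function.Surjective P) (F : (Fin n → ℤ) →ₗ[ℤ] (Fin k → ℤ))
    (hker : LinearMap.ker P ≤ LinearMap.ker F) :
    ∃ F₁ : (Fin m → ℤ) →ₗ[ℤ] (Fin k → ℤ), F = F₁.comp P := by
  classical
  set s : (Fin m → ℤ) →ₗ[ℤ] (Fin n → ℤ) :=
    (Pi.basisFun ℤ (Fin m)).constr ℤ (fun i => Classical.choose (hP (Pi.single i 1))) with hs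
  have hPs : ∀ x, P (s x) = x := by
    have hPsl : P.comp s = LinearMap.id := by
      apply (Pi.basisFun ℤ (Fin m)).ext
      intro i
      rw [LinearMap.comp_apply, LinearMap.id_apply]
      rw [hs, Module.Basis.constr_basis]
      rw [Classical.choose_spec (hP (Pi.single i 1))]
      exact (Pi.basisFun_apply ℤ (Fin m) i).symm
    intro x
    exact LinearMap.congr_fun hPsl x
  refine ⟨F.comp s, ?_⟩
  apply LinearMap.ext
  intro x
  rw [LinearMap.comp_apply, LinearMap.comp_apply]
  have hmem : s (P x) - x ∈ LinearMap.ker P := by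
    rw [LinearMap.mem_ker, map_sub, hPs, sub_self]
  have : F (s (P x) - x) = 0 := hker hmem
  rw [map_sub, sub_eq_zero] at this
  exact this.symm

end Projection
section Assembly

theorem IsRatCone.isCone {m : ℕ} {σ : Set (Fin m → ℝ)} (h : IsRatCone σ) : IsCone σ := by
  obtain ⟨s, rfl⟩ := h
  exact isCone_coneHull _

theorem zcone_eq_image {m : ℕ} (t : Finset (Fin m → ℤ)) :
    zcone t = coneHull (((t.image toR) : Finset (Fin m → ℝ)) : Set (Fin m → ℝ)) := by
  rw [Finset.coe_image]; rfl

theorem fixpoint_faces_zcone {m : ℕ} (u w : Finset (Fin m → ℤ))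
    (h1 : ∀ F, IsFaceOf F (zcone u) → (qint F ∩ zcone w).Nonempty → F ⊆ zcone w)
    (h2 : ∀ F, IsFaceOf F (zcone w) → (qint F ∩ zcone u).Nonempty → F ⊆ zcone u) :
    IsFaceOf (zcone u ∩ zcone w) (zcone u) := by
  rw [zcone_eq_image u, zcone_eq_image w] at h1 h2 ⊢
  exact fixpoint_faces _ (u.image toR) (w.image toR) le_rfl h1 h2

/-- The key face algebra: faces of two cones intersecting along a common face
intersect in a face. -/
theorem face_inter_face {V : Type*} [AddCommGroup V] [Module ℝ V]
    {γ γ' Di Dj : Set V} (hγ : IsFaceOf γ Di) (hγ' : IsFaceOf γ' Dj)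
    (hij : IsFaceOf (Di ∩ Dj) Di) : IsFaceOf (γ ∩ γ') γ := by
  set φ := Di ∩ Dj with hφ
  have heq : γ ∩ γ' = γ ∩ (γ' ∩ φ) := by
    apply le_antisymm
    · intro x ⟨hx, hx'⟩
      exact ⟨hx, hx', hγ.2.1 hx, hγ'.2.1 hx'⟩
    · intro x ⟨hx, hx', _⟩
      exact ⟨hx, hx'⟩
  rw [heq]
  have h1 : IsFaceOf (γ' ∩ φ) φ :=
    isFaceOf_inter_subcone hγ' Set.inter_subset_right hij.1
  have h2 : IsFaceOf (γ' ∩ φ) Di := h1.trans hij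
  exact isFaceOf_inter_left hγ h2

end Assembly
/-- For every system `S` of `N`-cones and every primitive
sublattice `L ⊆ N` there exists a quotient quasifan of `S` by `L` in
`N₁ := N/L` itself: a quasifan `Sig1` in `N₁` such that the projection
`P₁ : N → N₁` (a surjection with kernel exactly `L`) defines a map of systems
of cones from `S` to `Sig1`, and every map of systems of cones
`F : (N,S) → (N',Sig2)` into a quasifan `Sig2` with `F(L) = 0` factors as
`F = F₁ ∘ P₁` for a unique map of quasifans `F₁`. -/
theorem quotient_quasifan_exists {n : ℕ} (S : Set (Set (Fin n → ℝ)))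
    (hS : IsConeSystem S) (L : Submodule ℤ (Fin n → ℤ)) (hL : IsPrimitive L) :
    ∃ (m : ℕ) (P : (Fin n → ℤ) →ₗ[ℤ] (Fin m → ℤ)),
      Function.Surjective P ∧ LinearMap.ker P = L ∧
      ∃ Sig1 : Set (Set (Fin m → ℝ)), IsQuasifan Sig1 ∧ IsConeMap P S Sig1 ∧
        ∀ (k : ℕ) (F : (Fin n → ℤ) →ₗ[ℤ] (Fin k → ℤ)) (Sig2 : Set (Set (Fin k → ℝ))),
          IsQuasifan Sig2 → IsConeMap F S Sig2 → L ≤ LinearMap.ker F →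
          ∃! F₁ : (Fin m → ℤ) →ₗ[ℤ] (Fin k → ℤ), IsConeMap F₁ Sig1 Sig2 ∧ F = F₁.comp P := by
  classical
  obtain ⟨m, P, hPsurj, hPker⟩ := exists_projection L hL
  refine ⟨m, P, hPsurj, hPker, ?_⟩
  -- index the cones of `S` and choose generators
  set ι : Type := ↥hS.1.toFinset with hι
  have hιS : ∀ i : ι, (i : Set (Fin n → ℝ)) ∈ S := fun i => hS.1.mem_toFinset.1 i.2
  have hgen : ∀ i : ι, ∃ s : Finset (Fin n → ℤ),
      (i : Set (Fin n → ℝ)) = coneHull (toR '' (s : Set (Fin n → ℤ))) :=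
    fun i => hS.2 _ (hιS i)
  set gen : ι → Finset (Fin n → ℤ) := fun i => (hgen i).choose with hgendef
  have hgeneq : ∀ i : ι, (i : Set (Fin n → ℝ)) = coneHull (toR '' ((gen i : Finset _) : Set _)) :=
    fun i => (hgen i).choose_spec
  -- initial family: images of the cones of `S`
  set t0 : ι → Finset (Fin m → ℤ) := fun i => (gen i).image P with ht0
  have himg : ∀ i : ι, extR P '' (i : Set (Fin n → ℝ)) = zcone (t0 i) := by
    intro i
    rw [hgeneq i, extR_image_coneHull]
    rfl
  set U : Finset (Fin m → ℤ) := Finset.univ.biUnion t0 with hU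
  have ht0U : ∀ i, t0 i ⊆ U := fun i => Finset.subset_biUnion_of_mem t0 (Finset.mem_univ i)
  -- the invariant preserved under merging
  set Good : Finset (Fin m → ℤ) → Prop := fun u =>
    ∀ (k : ℕ) (F₁ : (Fin m → ℤ) →ₗ[ℤ] (Fin k → ℤ)) (Sig2 : Set (Set (Fin k → ℝ))),
      IsQuasifan Sig2 → (∀ i : ι, ∃ τ ∈ Sig2, extR F₁ '' zcone (t0 i) ⊆ τ) →
      ∃ τ ∈ Sig2, extR F₁ '' zcone u ⊆ τ with hGood
  have hGood0 : ∀ i, Good (t0 i) := by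
    intro i k F₁ Sig2 _ hbase
    exact hbase i
  have HG : ∀ (u w : Finset (Fin m → ℤ)) (F : Set (Fin m → ℝ)), Good u → Good w →
      IsFaceOf F (zcone u) → (qint F ∩ zcone w).Nonempty →
      Good (w ∪ u.filter (fun g => toR g ∈ F)) := by
    intro u w F hGu hGw hF hne k F₁ Sig2 hSig2 hbase
    obtain ⟨τu, hτu, hτusub⟩ := hGu k F₁ Sig2 hSig2 hbase
    obtain ⟨τw, hτw, hτwsub⟩ := hGw k F₁ Sig2 hSig2 hbase
    obtain ⟨z, hzF, hzw⟩ := hne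
    have hτucone : IsCone τu := (hSig2.1.2 _ hτu).isCone
    have hτwcone : IsCone τw := (hSig2.1.2 _ hτw).isCone
    have hfaceuw : IsFaceOf (τu ∩ τw) τu := hSig2.2.2 _ hτu _ hτw
    have hDsub : extR F₁ '' F ⊆ τu :=
      (Set.image_mono hF.2.1).trans hτusub
    have hFz : extR F₁ z ∈ qint (extR F₁ '' F) := qint_image _ hzF
    have hFzw : extR F₁ z ∈ τw := hτwsub ⟨z, hzw, rfl⟩
    have hFτw : extR F₁ '' F ⊆ τw :=
      qint_force hτucone hτwcone hfaceuw hDsub hFz hFzw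
    refine ⟨τw, hτw, ?_⟩
    unfold zcone
    rw [image_coneHull]
    apply coneHull_min hτwcone
    rintro _ ⟨_, ⟨g, hg, rfl⟩, rfl⟩
    rcases Finset.mem_union.1 hg with hgw | hgf
    · exact hτwsub ⟨toR g, subset_coneHull _ ⟨g, hgw, rfl⟩, rfl⟩
    · rw [Finset.mem_filter] at hgf
      exact hFτw ⟨toR g, hgf.2, rfl⟩
  -- run the merging algorithm
  obtain ⟨t', ht'sub, ht'G, ht'fix⟩ := merge_alg U Good HG
    (∑ i, (U.card - (t0 i).card)) t0 ht0U hGood0 le_rfl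
  -- the quotient quasifan
  set Sig1 : Set (Set (Fin m → ℝ)) := {γ | ∃ i : ι, IsFaceOf γ (zcone (t' i))} with hSig1
  have hfacepair : ∀ i j : ι, IsFaceOf (zcone (t' i) ∩ zcone (t' j)) (zcone (t' i)) :=
    fun i j => fixpoint_faces_zcone (t' i) (t' j)
      (fun F hF hne => ht'fix i j F hF hne)
      (fun F hF hne => ht'fix j i F hF hne)
  have hQF1 : IsQuasifan Sig1 := by
    refine ⟨⟨?_, ?_⟩, ?_, ?_⟩
    · -- finiteness
      have hsub : Sig1 ⊆ ⋃ i : ι, {τ | IsFaceOf τ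
          (coneHull ((((t' i).image toR) : Finset (Fin m → ℝ)) : Set (Fin m → ℝ)))} := by
        rintro γ ⟨i, hγ⟩
        apply Set.mem_iUnion.2
        exact ⟨i, by rw [← zcone_eq_image]; exact hγ⟩
      exact Set.Finite.subset (Set.finite_iUnion (fun i => finite_faces _)) hsub
    · -- rationality
      rintro γ ⟨i, hγ⟩
      exact ⟨(t' i).filter (fun g => toR g ∈ γ), zcone_filter_face (t' i) hγ⟩
    · -- face-closed
      rintro γ ⟨i, hγ⟩ τ hτ
      exact ⟨i, hτ.trans hγ⟩
    · -- pairwise intersections are faces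
      rintro γ ⟨i, hγ⟩ γ' ⟨j, hγ'⟩
      exact face_inter_face hγ hγ' (hfacepair i j)
  have hConeMap1 : IsConeMap P S Sig1 := by
    intro σ hσ
    have hσ' : σ ∈ hS.1.toFinset := hS.1.mem_toFinset.2 hσ
    set i : ι := ⟨σ, hσ'⟩ with hidef
    refine ⟨zcone (t' i), ⟨i, isFaceOf_self (isCone_zcone _)⟩, ?_⟩
    have := himg i
    simp only [hidef] at this
    rw [this]
    exact ht'sub i
  refine ⟨Sig1, hQF1, hConeMap1, ?_⟩
  intro k F Sig2 hSig2 hFmap hLkerF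
  have hkerP : LinearMap.ker P ≤ LinearMap.ker F := by rw [hPker]; exact hLkerF
  obtain ⟨F₁, hF₁⟩ := exists_factor P hPsurj F hkerP
  have hbase : ∀ i : ι, ∃ τ ∈ Sig2, extR F₁ '' zcone (t0 i) ⊆ τ := by
    intro i
    obtain ⟨τ, hτ, hτsub⟩ := hFmap _ (hιS i)
    refine ⟨τ, hτ, ?_⟩
    have h1 : extR F₁ '' zcone (t0 i) = coneHull (toR ''
        ((((gen i).image P).image F₁ : Finset (Fin k → ℤ)) : Set (Fin k → ℤ))) := by
      rw [ht0]
      exact extR_image_coneHull F₁ ((gen i).image P)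
    have h2 : ((gen i).image P).image F₁ = (gen i).image F := by
      rw [Finset.image_image]
      apply Finset.image_congr
      intro g _
      rw [hF₁]
      rfl
    have h3 : extR F '' (i : Set (Fin n → ℝ)) = coneHull (toR ''
        (((gen i).image F : Finset (Fin k → ℤ)) : Set (Fin k → ℤ))) := by
      rw [hgeneq i]
      exact extR_image_coneHull F (gen i)
    rw [h1, h2, ← h3]
    exact hτsub
  refine ⟨F₁, ⟨?_, hF₁⟩, ?_⟩
  · rintro γ ⟨i, hγ⟩
    obtain ⟨τ, hτ, hτsub⟩ := ht'G i k F₁ Sig2 hSig2 hbase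
    exact ⟨τ, hτ, (Set.image_mono hγ.2.1).trans hτsub⟩
  · rintro G ⟨-, hG⟩
    apply surj_cancel P hPsurj
    rw [← hG, ← hF₁]
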